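/- arXiv:2208.13115 — 14 statements merged into one kernel-verified Lean document; each statement's English description precedes it below -/
import Mathlib

section
/- Every terrace Λ ⊆ Z^d is saturated, bounded below, and for each z ∈ Λ there exists i ∈ [d] with z − e_i ∉ Λ_+. -/
open Set

/-- The `i`-th standard basis vector of `ℤ^d`. -/
def eVec (d : ℕ) (i : Fin d) : Fin d → ℤ := Pi.single i 1

/-- `C_+ = ⋃_{z ∈ C} z_+`, where `z_+ = {y : y^[i] ≥ z^[i] for all i}`. -/
def plusSet {d : ℕ} (C : Set (Fin d → ℤ)) : Set (Fin d → ℤ) :=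
  {y | ∃ z ∈ C, ∀ i, z i ≤ y i}

/-- `C_- = ⋃_{z ∈ C} z_-`, where `z_- = {y : y^[i] ≤ z^[i] for all i}`. -/
def minusSet {d : ℕ} (C : Set (Fin d → ℤ)) : Set (Fin d → ℤ) :=
  {y | ∃ z ∈ C, ∀ i, y i ≤ z i}

/-- `C` is saturated: every axis-parallel line meets `C`. -/
def Saturated {d : ℕ} (C : Set (Fin d → ℤ)) : Prop :=
  ∀ (y : Fin d → ℤ) (i : Fin d), ∃ k : ℤ, y + k • eVec d i ∈ C

/-- `C` is solid above: `C_+ = C`. -/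
def SolidAbove {d : ℕ} (C : Set (Fin d → ℤ)) : Prop := plusSet C = C

/-- `C` is bounded below: for every `y` and `i`, `{k : y + k e_i ∈ C}` is bounded below. -/
def BoundedBelow {d : ℕ} (C : Set (Fin d → ℤ)) : Prop :=
  ∀ (y : Fin d → ℤ) (i : Fin d), ∃ m : ℤ, ∀ k : ℤ, y + k • eVec d i ∈ C → m ≤ k

/-- A set is good if it is saturated, solid above, and bounded below. -/
def Good {d : ℕ} (C : Set (Fin d → ℤ)) : Prop :=
  Saturated C ∧ SolidAbove C ∧ BoundedBelow C

/-- `λ_C`: the set of points `γ_C(y,i) = y + k e_i` with `k` smallest such that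
`y + k e_i ∈ C`, over all `y ∈ ℤ^d` and `i ∈ [d]`. -/
def lambdaOf {d : ℕ} (C : Set (Fin d → ℤ)) : Set (Fin d → ℤ) :=
  {z | ∃ (y : Fin d → ℤ) (i : Fin d) (k : ℤ),
    z = y + k • eVec d i ∧ z ∈ C ∧ ∀ k' : ℤ, y + k' • eVec d i ∈ C → k ≤ k'}

/-- A terrace is `λ_C` for some good set `C`. -/
def IsTerrace {d : ℕ} (Λ : Set (Fin d → ℤ)) : Prop :=
  ∃ C : Set (Fin d → ℤ), Good C ∧ Λ = lambdaOf C

/-- The box `[a,b] = {z : a^[i] ≤ z^[i] ≤ b^[i] for all i}`. -/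
def box {d : ℕ} (a b : Fin d → ℤ) : Set (Fin d → ℤ) :=
  {z | ∀ i, a i ≤ z i ∧ z i ≤ b i}

theorem terrace_basic {d : ℕ} (Λ : Set (Fin d → ℤ)) (h : IsTerrace Λ) :
    Saturated Λ ∧ BoundedBelow Λ ∧
      ∀ z ∈ Λ, ∃ i : Fin d, z - eVec d i ∉ plusSet Λ := by
  obtain ⟨C, ⟨hSat, hSolid, hBdd⟩, rfl⟩ := h
  have hsub : lambdaOf C ⊆ C := by
    rintro z ⟨y, i, k, rfl, hz, hmin⟩; exact hz
  have key : ∀ (y : Fin d → ℤ) (i : Fin d), ∃ k : ℤ,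
      y + k • eVec d i ∈ lambdaOf C := by
    intro y i
    obtain ⟨k, hk, hmin⟩ := Int.exists_least_of_bdd
      (P := fun k => y + k • eVec d i ∈ C) (hBdd y i) (hSat y i)
    exact ⟨k, y, i, k, rfl, hk, hmin⟩
  refine ⟨key, ?_, ?_⟩
  · intro y i
    obtain ⟨m, hm⟩ := hBdd y i
    exact ⟨m, fun k hk => hm k (hsub hk)⟩
  · rintro z ⟨y, i, k, rfl, hz, hmin⟩
    refine ⟨i, fun ⟨w, hw, hle⟩ => ?_⟩
    have hwC : w ∈ C := hsub hw
    have : y + (k - 1) • eVec d i ∈ C := by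
      rw [← hSolid]
      refine ⟨w, hwC, fun j => ?_⟩
      have := hle j
      simp only [eVec, sub_smul, Pi.add_apply, Pi.sub_apply, Pi.smul_apply, smul_eq_mul, Pi.sub_apply] at *; omega
    have := hmin _ this
    omega
end

section
/- If Λ ⊆ Z^d is a terrace and L is a line parallel to one of the coordinate axes, then Λ ∩ L is finite. -/
open Set

lemma upward {d : ℕ} {C : Set (Fin d → ℤ)} (hC : SolidAbove C) {z w : Fin d → ℤ}
    (hz : z ∈ C) (hzw : ∀ l, z l ≤ w l) : w ∈ C := by
  rw [← hC]; exact ⟨z, hz, hzw⟩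

lemma exists_sub_not_mem {d : ℕ} {C : Set (Fin d → ℤ)} {z : Fin d → ℤ}
    (hz : z ∈ lambdaOf C) : ∃ j, z - eVec d j ∉ C := by
  obtain ⟨y', j, k', rfl, hzC, hmin⟩ := hz
  refine ⟨j, fun hcon => ?_⟩
  have heq : (y' + k' • eVec d j) - eVec d j = y' + (k' - 1) • eVec d j := by
    rw [sub_smul, one_smul]; abel
  rw [heq] at hcon
  have := hmin _ hcon
  omega

theorem terrace_line_finite {d : ℕ} (Λ : Set (Fin d → ℤ)) (h : IsTerrace Λ)
    (y : Fin d → ℤ) (i : Fin d) :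
    (Λ ∩ {x | ∃ k : ℤ, x = y + k • eVec d i}).Finite := by
  obtain ⟨C, ⟨hsat, hsolid, hbb⟩, rfl⟩ := h
  obtain ⟨m, hm⟩ := hbb y i
  choose kf hkf using fun j => hsat (y - eVec d j) i
  have hne : (Finset.univ : Finset (Fin d)).Nonempty := ⟨i, Finset.mem_univ i⟩
  set K : ℤ := Finset.univ.sup' hne kf with hK
  apply ((Set.finite_Icc m K).image (fun k => y + k • eVec d i)).subset
  rintro z ⟨hzΛ, k, rfl⟩
  refine ⟨k, ⟨?_, ?_⟩, rfl⟩
  · obtain ⟨y', j, k', heq, hzC, -⟩ := hzΛ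
    exact hm k hzC
  · by_contra hk
    push_neg at hk
    obtain ⟨j, hj⟩ := exists_sub_not_mem hzΛ
    apply hj
    apply upward hsolid (hkf j)
    intro l
    have hkfj : kf j ≤ k := le_of_lt (lt_of_le_of_lt (Finset.le_sup' kf (Finset.mem_univ j)) hk)
    simp only [Pi.add_apply, Pi.sub_apply, Pi.smul_apply, smul_eq_mul, eVec, Pi.single_apply]
    split_ifs <;> omega
end

section
/- For any terrace Λ ⊆ Z^d, Λ_+ ∩ Λ_− = Λ, where Λ_+ = ⋃_{z∈Λ} z_+ and Λ_− = ⋃_{z∈Λ} z_−. -/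
open Set

theorem terrace_plus_inter_minus {d : ℕ} (Λ : Set (Fin d → ℤ)) (h : IsTerrace Λ) :
    plusSet Λ ∩ minusSet Λ = Λ := by
  obtain ⟨C, ⟨hsat, hsolid, hbb⟩, rfl⟩ := h
  have hup : ∀ z ∈ C, ∀ y : Fin d → ℤ, (∀ i, z i ≤ y i) → y ∈ C := by
    intro z hz y hy
    rw [← hsolid]; exact ⟨z, hz, hy⟩
  ext x
  constructor
  · rintro ⟨⟨z₁, hz₁, hle₁⟩, z₂, hz₂, hle₂⟩
    obtain ⟨y₁, i₁, k₁, hz₁eq, hz₁C, hmin₁⟩ := hz₁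
    obtain ⟨y₂, i₂, k₂, hz₂eq, hz₂C, hmin₂⟩ := hz₂
    refine ⟨x, i₂, 0, by simp, hup z₁ hz₁C x hle₁, ?_⟩
    intro k' hk'
    by_contra hneg
    push_neg at hneg
    have hle : ∀ j, (x + k' • eVec d i₂) j ≤ (y₂ + (k₂ - 1) • eVec d i₂) j := by
      intro j
      have hx := hle₂ j
      rw [hz₂eq] at hx
      simp only [Pi.add_apply, Pi.smul_apply, eVec, smul_eq_mul] at hx ⊢
      by_cases hj : j = i₂
      · subst hj; simp [Pi.single_apply] at hx ⊢; omega
      · simp [Pi.single_apply, hj] at hx ⊢; omega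
    have hmem := hup _ hk' _ hle
    have := hmin₂ _ hmem
    omega
  · intro hz
    exact ⟨⟨x, hz, fun i => le_refl _⟩, ⟨x, hz, fun i => le_refl _⟩⟩
end

section
/- If Λ ⊆ Z^d is a terrace, then Λ_+ \ Λ is solid above: if x ∈ Λ_+ \ Λ and y ∈ x_+, then y ∈ Λ_+ \ Λ. -/
open Set

theorem terrace_plus_diff_solid_above {d : ℕ} (Λ : Set (Fin d → ℤ)) (h : IsTerrace Λ) :
    ∀ x ∈ plusSet Λ \ Λ, ∀ y : Fin d → ℤ, (∀ i, x i ≤ y i) → y ∈ plusSet Λ \ Λ := by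
  obtain ⟨C, ⟨-, hsolid, -⟩, rfl⟩ := h
  have hup : ∀ z ∈ C, ∀ w : Fin d → ℤ, (∀ i, z i ≤ w i) → w ∈ C := by
    intro z hz w hw
    rw [← hsolid]
    exact ⟨z, hz, hw⟩
  rintro x ⟨⟨z, hzΛ, hzx⟩, hxΛ⟩ y hxy
  have hzC : z ∈ C := hzΛ.choose_spec.choose_spec.choose_spec.2.1
  have hxC : x ∈ C := hup z hzC x hzx
  refine ⟨⟨z, hzΛ, fun i => (hzx i).trans (hxy i)⟩, ?_⟩
  -- suppose y ∈ Λ, derive a contradiction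
  rintro ⟨y0, i, k, rfl, hyC, hmin⟩
  -- then y - e_i ∉ C
  have hy_sub : y0 + (k - 1) • eVec d i ∉ C := fun hc => by linarith [hmin _ hc]
  -- but x - e_i ∈ C, else x ∈ Λ
  have hx_sub : x + (-1) • eVec d i ∈ C := by
    by_contra hxe
    apply hxΛ
    refine ⟨x, i, 0, by simp, hxC, fun k' hk' => ?_⟩
    by_contra hlt
    push_neg at hlt
    apply hxe
    apply hup _ hk'
    intro j
    simp only [Pi.add_apply, Pi.smul_apply, eVec, Pi.single_apply, smul_eq_mul]
    by_cases hji : j = i <;> simp [hji] <;> omega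
  -- y - e_i ≥ x - e_i, contradiction
  apply hy_sub
  apply hup _ hx_sub
  intro j
  have := hxy j
  simp only [Pi.add_apply, Pi.smul_apply, eVec, Pi.single_apply, smul_eq_mul] at this ⊢
  by_cases hji : j = i <;> simp [hji] at this ⊢ <;> omega
end

section
/- Let Λ ⊆ Z^d be a terrace. If a nearest-neighbour path starts in Λ_+ and ends in (Λ_+)^c, and k is the first time the path is in (Λ_+)^c, then the path's position at time k−1 lies in Λ. -/
open Set

theorem terrace_path_exit {d : ℕ} (Λ : Set (Fin d → ℤ)) (h : IsTerrace Λ)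
    (n : ℕ) (γ : ℕ → Fin d → ℤ)
    (hpath : ∀ j < n, ∃ i : Fin d, γ (j+1) = γ j + eVec d i ∨ γ (j+1) = γ j - eVec d i)
    (h0 : γ 0 ∈ plusSet Λ) (hn : γ n ∉ plusSet Λ)
    (k : ℕ) (hk : k ≤ n) (hkout : γ k ∉ plusSet Λ)
    (hfirst : ∀ j < k, γ j ∈ plusSet Λ) :
    γ (k - 1) ∈ Λ := by
  obtain ⟨C, ⟨hsat, hsolid, hbdd⟩, hΛ⟩ := h
  have heV : ∀ (i j : Fin d), 0 ≤ eVec d i j := by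
    intro i j
    simp only [eVec, Pi.single_apply]
    split <;> norm_num
  have hCplus : ∀ x ∈ C, ∀ y : Fin d → ℤ, (∀ i, x i ≤ y i) → y ∈ C := by
    intro x hx y hxy
    rw [← hsolid]; exact ⟨x, hx, hxy⟩
  have hΛC : Λ ⊆ C := by
    rw [hΛ]; rintro z ⟨y, i, m, rfl, hz, _⟩; exact hz
  have hk0 : 0 < k := by
    rcases Nat.eq_zero_or_pos k with rfl | h; · exact absurd h0 hkout
    · exact h
  have hkn : k - 1 < n := lt_of_lt_of_le (Nat.sub_lt hk0 one_pos) hk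
  obtain ⟨i, hi⟩ := hpath (k - 1) hkn
  have hks : k - 1 + 1 = k := by omega
  rw [hks] at hi
  have hCΛ : ∀ x ∈ C, x ∈ plusSet Λ := by
    intro x hx
    obtain ⟨m, hm⟩ := hbdd x i
    obtain ⟨k₀, hk₀C, hk₀min⟩ := Int.exists_least_of_bdd
      (P := fun z => x + z • eVec d i ∈ C) ⟨m, fun z hz => hm z hz⟩
      ⟨0, by simpa using hx⟩
    have hk₀0 : k₀ ≤ 0 := hk₀min 0 (by simpa using hx)
    refine ⟨x + k₀ • eVec d i, ?_, ?_⟩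
    · rw [hΛ]; exact ⟨x, i, k₀, rfl, hk₀C, hk₀min⟩
    · intro j
      have := heV i j
      simp only [Pi.add_apply, Pi.smul_apply, smul_eq_mul]
      nlinarith
  have hprev : γ (k - 1) ∈ C := by
    obtain ⟨z, hz, hle⟩ := hfirst (k - 1) (Nat.sub_lt hk0 one_pos)
    exact hCplus z (hΛC hz) _ hle
  have hkC : γ k ∉ C := fun hc => hkout (hCΛ _ hc)
  rcases hi with hi | hi
  · exfalso
    apply hkC
    rw [hi]
    exact hCplus _ hprev _ (fun j => by
      have := heV i j; simp only [Pi.add_apply]; linarith)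
  · have hx : γ (k - 1) = γ k + (1 : ℤ) • eVec d i := by
      rw [hi]; funext j; simp
    rw [hΛ]
    refine ⟨γ k, i, 1, hx, hprev, ?_⟩
    intro k' hk'
    by_contra hlt
    push_neg at hlt
    have hk'0 : k' ≤ 0 := by omega
    apply hkC
    refine hCplus _ hk' _ (fun j => ?_)
    have := heV i j
    simp only [Pi.add_apply, Pi.smul_apply, smul_eq_mul]
    nlinarith
end

section
/- If Λ ⊆ Z^d is a terrace, then for every x ∈ Z^d the set Λ_+ ∩ x_− is finite. -/
open Set

theorem terrace_plus_inter_lower_finite {d : ℕ} (Λ : Set (Fin d → ℤ))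
    (h : IsTerrace Λ) (x : Fin d → ℤ) :
    (plusSet Λ ∩ {y | ∀ i, y i ≤ x i}).Finite := by
  obtain ⟨C, ⟨hsat, hsolid, hbdd⟩, rfl⟩ := h
  choose m hm using hbdd x
  have key : (plusSet (lambdaOf C) ∩ {y | ∀ i, y i ≤ x i}) ⊆
      Set.Icc (fun j => x j + m j) x := by
    rintro y ⟨⟨z, hz, hzy⟩, hyx⟩
    obtain ⟨yy, ii, kk, -, hzC, -⟩ := hz
    constructor
    · intro j
      have hw : x + (z j - x j) • eVec d j ∈ C := by
        rw [← hsolid]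
        refine ⟨z, hzC, fun i => ?_⟩
        by_cases hij : i = j
        · subst hij; simp [eVec, Pi.single_eq_same]
        · simp only [Pi.add_apply, Pi.smul_apply, eVec, Pi.single_eq_of_ne hij,
            smul_zero, add_zero]
          exact le_trans (hzy i) (hyx i)
      have h1 := hm j _ hw
      have h2 : z j ≤ y j := hzy j
      show x j + m j ≤ y j
      omega
    · intro j; exact hyx j
  exact (Set.finite_Icc _ _).subset key
end

section
/- Let Λ ⊆ Z^d be a terrace. If x ∈ Λ_+, y ∈ Λ, and y ∈ x_+, then the entire box [x,y] = {z : x^[i] ≤ z^[i] ≤ y^[i] ∀i} is contained in Λ. -/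
open Set

theorem terrace_box_subset {d : ℕ} (Λ : Set (Fin d → ℤ)) (h : IsTerrace Λ)
    (x y : Fin d → ℤ) (hx : x ∈ plusSet Λ) (hy : y ∈ Λ) (hxy : ∀ i, x i ≤ y i) :
    box x y ⊆ Λ := by
  obtain ⟨C, ⟨hSat, hSA, hBB⟩, rfl⟩ := h
  have upC : ∀ {u v : Fin d → ℤ}, u ∈ C → (∀ i, u i ≤ v i) → v ∈ C := by
    intro u v hu hle
    rw [← hSA]
    exact ⟨u, hu, hle⟩
  obtain ⟨w, hwΛ, hwx⟩ := hx
  obtain ⟨y₀, i₀, k, hyeq, hyC, hymin⟩ := hy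
  have hwC : w ∈ C := by
    obtain ⟨_, _, _, _, h1, _⟩ := hwΛ
    exact h1
  intro z hz
  have hzC : z ∈ C := upC hwC (fun i => (hwx i).trans (hz i).1)
  refine ⟨z, i₀, 0, by simp, hzC, ?_⟩
  intro k' hk'
  by_contra hneg
  push_neg at hneg
  have hmem : y₀ + (k - 1) • eVec d i₀ ∈ C := by
    apply upC hk'
    intro i
    have hyi : y i = y₀ i + k * (if i = i₀ then 1 else 0) := by
      rw [hyeq]
      simp [eVec, Pi.single_apply]
    simp only [Pi.add_apply, Pi.smul_apply, eVec, Pi.single_apply, smul_eq_mul]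
    by_cases hi : i = i₀
    · simp only [hi, if_pos rfl, if_true] at *
      have := (hz i₀).2
      omega
    · simp only [hi, if_neg hi, if_false] at *
      have := (hz i).2
      omega
  have := hymin _ hmem
  omega
end

section
/- For a point x ∈ Z^d and a terrace Λ: x ∈ Λ if and only if x ∈ Λ_+ and there exists i ∈ [d] with x − e_i ∉ Λ_+. -/
open Set

theorem terrace_mem_iff {d : ℕ} (Λ : Set (Fin d → ℤ)) (h : IsTerrace Λ)
    (x : Fin d → ℤ) :
    x ∈ Λ ↔ x ∈ plusSet Λ ∧ ∃ i : Fin d, x - eVec d i ∉ plusSet Λ := by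
  obtain ⟨C, ⟨hsat, hsolid, hbdd⟩, rfl⟩ := h
  have hsub : lambdaOf C ⊆ C := fun z hz => hz.choose_spec.choose_spec.choose_spec.2.1
  constructor
  · rintro hx
    obtain ⟨y, i, k, hxe, hxC, hmin⟩ := hx
    refine ⟨⟨x, ⟨y, i, k, hxe, hxC, hmin⟩, fun j => le_refl _⟩, i, ?_⟩
    rintro ⟨z, hzΛ, hz⟩
    have hC : x - eVec d i ∈ C := by
      rw [← hsolid]; exact ⟨z, hsub hzΛ, hz⟩
    have hkey : y + (k - 1) • eVec d i ∈ C := by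
      have : y + (k - 1) • eVec d i = x - eVec d i := by
        rw [hxe, sub_smul, one_smul]; abel
      rwa [this]
    have := hmin (k - 1) hkey
    omega
  · rintro ⟨⟨z, hzΛ, hz⟩, i, hi⟩
    have hxC : x ∈ C := by
      rw [← hsolid]; exact ⟨z, hsub hzΛ, hz⟩
    refine ⟨x, i, 0, by simp, hxC, ?_⟩
    intro k' hk'
    by_contra hneg
    push_neg at hneg
    obtain ⟨b, hb⟩ := hbdd x i
    obtain ⟨m, hmC, hmin⟩ := Int.exists_least_of_bdd (P := fun k => x + k • eVec d i ∈ C)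
      ⟨b, fun z hz => hb z hz⟩ ⟨k', hk'⟩
    have hm1 : m ≤ -1 := le_trans (hmin k' hk') (by omega)
    exact hi ⟨x + m • eVec d i, ⟨x, i, m, rfl, hmC, hmin⟩, by
      intro j
      simp only [Pi.add_apply, Pi.sub_apply, Pi.smul_apply, eVec, Pi.single_apply,
        smul_eq_mul, mul_ite, mul_one, mul_zero]
      split <;> omega⟩
end

section
/- If Λ^(0) ⊇ Λ^(1) ⊇ … is a decreasing sequence of terraces in Z^d, then G := ⋂_s Λ^(s)_+ is a good set, and ⋂_s Λ^(s) = λ_G; in particular ⋂_s Λ^(s) is a terrace. -/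
open Set

section Aux
variable {d : ℕ}

lemma apply_add_smul (y : Fin d → ℤ) (k : ℤ) (i l : Fin d) :
    (y + k • eVec d i) l = y l + if l = i then k else 0 := by
  simp [eVec, Pi.single_apply, mul_ite]

lemma mem_plusSet_self {C : Set (Fin d → ℤ)} {z : Fin d → ℤ} (h : z ∈ C) : z ∈ plusSet C :=
  ⟨z, h, fun _ => le_rfl⟩

lemma plusSet_mono {C D : Set (Fin d → ℤ)} (h : C ⊆ D) : plusSet C ⊆ plusSet D :=
  fun y ⟨z, hz, hle⟩ => ⟨z, h hz, hle⟩

lemma plusSet_idem (C : Set (Fin d → ℤ)) : SolidAbove (plusSet C) :=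
  subset_antisymm
    (fun y ⟨z, ⟨w, hw, h1⟩, h2⟩ => ⟨w, hw, fun i => (h1 i).trans (h2 i)⟩)
    (fun _ h => mem_plusSet_self h)

lemma lambdaOf_subset (C : Set (Fin d → ℤ)) : lambdaOf C ⊆ C := by
  rintro z ⟨y, i, k, rfl, h, -⟩; exact h

lemma exists_min {C : Set (Fin d → ℤ)} (hsat : Saturated C) (hbb : BoundedBelow C)
    (y : Fin d → ℤ) (i : Fin d) :
    ∃ k : ℤ, (y + k • eVec d i ∈ C) ∧ ∀ k' : ℤ, y + k' • eVec d i ∈ C → k ≤ k' := by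
  obtain ⟨m, hm⟩ := hbb y i
  obtain ⟨k0, hk0⟩ := hsat y i
  have H := Int.exists_least_of_bdd (P := fun k => y + k • eVec d i ∈ C)
    ⟨m, fun z hz => hm z hz⟩ ⟨k0, hk0⟩
  obtain ⟨lb, h1, h2⟩ := H
  exact ⟨lb, h1, h2⟩

lemma mem_lambdaOf_boundary {C : Set (Fin d → ℤ)} (hC : SolidAbove C) {z : Fin d → ℤ}
    {i : Fin d} (hz : z ∈ C) (hni : z + (-1) • eVec d i ∉ C) : z ∈ lambdaOf C := by
  refine ⟨z, i, 0, by simp, hz, fun k' hk' => ?_⟩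
  by_contra h
  push_neg at h
  apply hni
  rw [← hC]
  refine ⟨z + k' • eVec d i, hk', fun l => ?_⟩
  rw [apply_add_smul, apply_add_smul]
  split_ifs <;> omega

lemma exists_boundary_of_mem_lambdaOf {C : Set (Fin d → ℤ)} {z : Fin d → ℤ}
    (hz : z ∈ lambdaOf C) : ∃ i, z + (-1) • eVec d i ∉ C := by
  obtain ⟨y, i, k, rfl, hmem, hmin⟩ := hz
  refine ⟨i, fun h => ?_⟩
  rw [add_assoc, ← add_smul] at h
  have := hmin _ h
  omega

lemma good_plus_lambda {D : Set (Fin d → ℤ)} (hD : Good D) :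
    Good (plusSet (lambdaOf D)) ∧ lambdaOf (plusSet (lambdaOf D)) = lambdaOf D := by
  obtain ⟨hsat, hsolid, hbb⟩ := hD
  have hsub : plusSet (lambdaOf D) ⊆ D := by
    have h := plusSet_mono (lambdaOf_subset D)
    rwa [hsolid] at h
  have hsolid' : SolidAbove (plusSet (lambdaOf D)) := plusSet_idem _
  have hsat' : Saturated (plusSet (lambdaOf D)) := by
    intro y i
    obtain ⟨k, hk, hmin⟩ := exists_min hsat hbb y i
    exact ⟨k, mem_plusSet_self ⟨y, i, k, rfl, hk, hmin⟩⟩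
  have hbb' : BoundedBelow (plusSet (lambdaOf D)) :=
    fun y i => (hbb y i).imp fun m hm k hk => hm k (hsub hk)
  refine ⟨⟨hsat', hsolid', hbb'⟩, subset_antisymm ?_ ?_⟩
  · intro z hz
    obtain ⟨i, hi⟩ := exists_boundary_of_mem_lambdaOf hz
    have hzD : z ∈ D := hsub (lambdaOf_subset _ hz)
    have hniD : z + (-1) • eVec d i ∉ D := by
      intro hmem
      apply hi
      obtain ⟨k, hk, hmin⟩ := exists_min hsat hbb (z + (-1) • eVec d i) i
      have hk0 : k ≤ 0 := hmin 0 (by simpa using hmem)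
      refine ⟨_, ⟨_, i, k, rfl, hk, hmin⟩, fun l => ?_⟩
      rw [apply_add_smul]
      split_ifs <;> omega
    exact mem_lambdaOf_boundary hsolid hzD hniD
  · intro z hz
    obtain ⟨i, hi⟩ := exists_boundary_of_mem_lambdaOf hz
    exact mem_lambdaOf_boundary hsolid' (mem_plusSet_self hz) (fun h => hi (hsub h))
end Aux

theorem terrace_decreasing_inter {d : ℕ} (Λs : ℕ → Set (Fin d → ℤ))
    (hT : ∀ s, IsTerrace (Λs s)) (hdec : ∀ s, Λs (s + 1) ⊆ Λs s) :
    Good (⋂ s, plusSet (Λs s)) ∧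
      (⋂ s, Λs s) = lambdaOf (⋂ s, plusSet (Λs s)) ∧
      IsTerrace (⋂ s, Λs s) := by
  have key : ∀ s, Good (plusSet (Λs s)) ∧ lambdaOf (plusSet (Λs s)) = Λs s := by
    intro s
    obtain ⟨D, hD, hΛ⟩ := hT s
    have h := good_plus_lambda hD
    rw [hΛ]
    exact ⟨h.1, h.2⟩
  have hGood : ∀ s, Good (plusSet (Λs s)) := fun s => (key s).1
  have hLam : ∀ s, lambdaOf (plusSet (Λs s)) = Λs s := fun s => (key s).2
  have hΛanti : ∀ s t, s ≤ t → Λs t ⊆ Λs s := by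
    intro s t hst
    induction hst with
    | refl => exact fun _ h => h
    | step _ ih => exact fun z hz => ih (hdec _ hz)
  have hCanti : ∀ s t, s ≤ t → plusSet (Λs t) ⊆ plusSet (Λs s) :=
    fun s t h => plusSet_mono (hΛanti s t h)
  have hSolidG : SolidAbove (⋂ s, plusSet (Λs s)) := by
    apply subset_antisymm
    · intro z hz
      rw [mem_iInter]
      intro s
      rw [← (hGood s).2.1]
      exact plusSet_mono (fun w hw => mem_iInter.mp hw s) hz
    · exact fun z hz => mem_plusSet_self hz
  have hBBG : BoundedBelow (⋂ s, plusSet (Λs s)) := by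
    intro y i
    obtain ⟨m, hm⟩ := (hGood 0).2.2 y i
    exact ⟨m, fun k hk => hm k (mem_iInter.mp hk 0)⟩
  have hSatG : Saturated (⋂ s, plusSet (Λs s)) := by
    intro y i
    choose M hM using fun j => (hGood 0).1 (y + (-1) • eVec d j) i
    have hne : (Finset.univ : Finset (Fin d)).Nonempty := ⟨i, Finset.mem_univ i⟩
    refine ⟨Finset.univ.sup' hne M, ?_⟩
    rw [mem_iInter]
    intro s
    obtain ⟨k, hk, hmin⟩ := exists_min (hGood s).1 (hGood s).2.2 y i
    have hzΛ : y + k • eVec d i ∈ lambdaOf (plusSet (Λs 0)) := by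
      rw [hLam 0]
      refine hΛanti 0 s (Nat.zero_le s) ?_
      rw [← hLam s]
      exact ⟨y, i, k, rfl, hk, hmin⟩
    obtain ⟨j, hj⟩ := exists_boundary_of_mem_lambdaOf hzΛ
    have hkM : k < M j := by
      by_contra hlt
      push_neg at hlt
      apply hj
      rw [← (hGood 0).2.1]
      refine ⟨y + (-1) • eVec d j + (M j) • eVec d i, hM j, fun l => ?_⟩
      simp only [apply_add_smul]
      split_ifs <;> omega
    have hkN : k ≤ Finset.univ.sup' hne M :=
      le_of_lt (lt_of_lt_of_le hkM (Finset.le_sup' M (Finset.mem_univ j)))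
    rw [← (hGood s).2.1]
    refine ⟨y + k • eVec d i, hk, fun l => ?_⟩
    simp only [apply_add_smul]
    split_ifs <;> omega
  have hGoodG : Good (⋂ s, plusSet (Λs s)) := ⟨hSatG, hSolidG, hBBG⟩
  have hEq : (⋂ s, Λs s) = lambdaOf (⋂ s, plusSet (Λs s)) := by
    apply subset_antisymm
    · intro z hz
      have hz0 : z ∈ lambdaOf (plusSet (Λs 0)) := by
        rw [hLam 0]; exact mem_iInter.mp hz 0
      obtain ⟨i, hi⟩ := exists_boundary_of_mem_lambdaOf hz0
      have hzG : z ∈ ⋂ s, plusSet (Λs s) :=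
        mem_iInter.mpr fun s => mem_plusSet_self (mem_iInter.mp hz s)
      exact mem_lambdaOf_boundary hSolidG hzG (fun h => hi (mem_iInter.mp h 0))
    · intro z hz
      have hzG := lambdaOf_subset _ hz
      obtain ⟨i, hi⟩ := exists_boundary_of_mem_lambdaOf hz
      have hex : ∃ s0, z + (-1) • eVec d i ∉ plusSet (Λs s0) := by
        by_contra h
        push_neg at h
        exact hi (mem_iInter.mpr h)
      obtain ⟨s0, hs0⟩ := hex
      rw [mem_iInter]
      intro t
      have h1 : z ∈ Λs (max t s0) := by
        rw [← hLam (max t s0)]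
        exact mem_lambdaOf_boundary (hGood _).2.1 (mem_iInter.mp hzG _)
          (fun h => hs0 (hCanti s0 _ (le_max_right t s0) h))
      exact hΛanti t _ (le_max_left t s0) h1
  exact ⟨hGoodG, hEq, ⟨_, hGoodG, hEq⟩⟩
end

section
/- Let Λ be a terrace in Z^d and define H_Λ = {x ∈ Λ : x + e_i ∈ Λ for all i ∈ [d]}. Then −Λ = {−x : x ∈ Λ} is a terrace if and only if H_Λ = ∅. -/
open Set

section Aux

variable {d : ℕ}

lemma mem_neg_image {D : Set (Fin d → ℤ)} {x : Fin d → ℤ} :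
    x ∈ (fun x => -x) '' D ↔ -x ∈ D := by
  constructor
  · rintro ⟨a, ha, rfl⟩; simpa using ha
  · intro h; exact ⟨-x, h, neg_neg x⟩

lemma mono_of_solidAbove {C : Set (Fin d → ℤ)} (hC : SolidAbove C)
    {s t : Fin d → ℤ} (hs : s ∈ C) (h : ∀ i, s i ≤ t i) : t ∈ C := by
  have : t ∈ plusSet C := ⟨s, hs, h⟩
  rwa [hC] at this

lemma lambda_char {C : Set (Fin d → ℤ)} (hC : SolidAbove C) (z : Fin d → ℤ) :
    z ∈ lambdaOf C ↔ z ∈ C ∧ ∃ i, z - eVec d i ∉ C := by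
  constructor
  · rintro ⟨y, i, k, rfl, hzC, hmin⟩
    refine ⟨hzC, i, fun hmem => ?_⟩
    have heq : y + k • eVec d i - eVec d i = y + (k - 1) • eVec d i := by
      rw [sub_smul, one_smul]; abel
    rw [heq] at hmem
    have := hmin _ hmem
    omega
  · rintro ⟨hzC, i, hnot⟩
    refine ⟨z, i, 0, by simp, hzC, fun k' hk' => ?_⟩
    by_contra hlt
    push_neg at hlt
    exact hnot (mono_of_solidAbove hC hk' (fun m => by
      simp only [Pi.add_apply, Pi.sub_apply, Pi.smul_apply, smul_eq_mul, eVec, Pi.single_apply]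
      split <;> omega))

lemma ray {C : Set (Fin d → ℤ)} (hC : Good C) (y : Fin d → ℤ) (i : Fin d) :
    ∃ k₀ : ℤ, ∀ k : ℤ, (y + k • eVec d i ∈ C ↔ k₀ ≤ k) := by
  classical
  obtain ⟨hsat, hsolid, hbdd⟩ := hC
  obtain ⟨m, hm⟩ := hbdd y i
  obtain ⟨k₀, hk₀, hleast⟩ :=
    Int.exists_least_of_bdd (P := fun k => y + k • eVec d i ∈ C) ⟨m, hm⟩ (hsat y i)
  refine ⟨k₀, fun k => ⟨hleast k, fun hle => ?_⟩⟩
  exact mono_of_solidAbove hsolid hk₀ (fun m => by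
    simp only [Pi.add_apply, Pi.smul_apply, smul_eq_mul, eVec, Pi.single_apply]
    split <;> omega)

end Aux

theorem neg_terrace_iff {d : ℕ} (Λ : Set (Fin d → ℤ)) (h : IsTerrace Λ) :
    IsTerrace ((fun x => -x) '' Λ) ↔ {x ∈ Λ | ∀ i, x + eVec d i ∈ Λ} = ∅ := by
  obtain ⟨C, hCgood, rfl⟩ := h
  have hsolid : SolidAbove C := hCgood.2.1
  have hsub : lambdaOf C ⊆ C := fun z hz => ((lambda_char hsolid z).mp hz).1
  constructor
  · rintro ⟨C', hC', hEq⟩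
    rw [eq_empty_iff_forall_notMem]
    rintro x ⟨hx, hall⟩
    have hx' : -x ∈ lambdaOf C' := by
      rw [← hEq]; exact mem_neg_image.mpr (by rw [neg_neg]; exact hx)
    obtain ⟨_, i, hi⟩ := (lambda_char hC'.2.1 _).mp hx'
    have h2 : -(x + eVec d i) ∈ lambdaOf C' := by
      rw [← hEq]; exact mem_neg_image.mpr (by rw [neg_neg]; exact hall i)
    have h3 := ((lambda_char hC'.2.1 _).mp h2).1
    rw [show -(x + eVec d i) = -x - eVec d i from by abel] at h3
    exact hi h3
  · intro hH
    classical
    choose K hK using fun y i => ray hCgood y i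
    set D : Set (Fin d → ℤ) := Cᶜ ∪ lambdaOf C with hDdef
    have hDdown : ∀ u v : Fin d → ℤ, u ∈ D → (∀ i, v i ≤ u i) → v ∈ D := by
      rintro u v (hu | hu) hle
      · exact Or.inl (fun hvC => hu (mono_of_solidAbove hsolid hvC hle))
      · by_cases hvC : v ∈ C
        · obtain ⟨huC, j, hj⟩ := (lambda_char hsolid u).mp hu
          refine Or.inr ((lambda_char hsolid v).mpr ⟨hvC, j, fun hmem => ?_⟩)
          exact hj (mono_of_solidAbove hsolid hmem (fun m => by
            simp only [Pi.sub_apply]; exact sub_le_sub_right (hle m) _))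
        · exact Or.inl hvC
    have hsol' : SolidAbove ((fun x => -x) '' D) := by
      ext x
      constructor
      · rintro ⟨z, hz, hle⟩
        rw [mem_neg_image] at hz ⊢
        exact hDdown (-z) (-x) hz (fun m => by
          simp only [Pi.neg_apply]
          exact neg_le_neg (hle m))
      · intro hx
        exact ⟨x, hx, fun m => le_refl _⟩
    have hsat' : Saturated ((fun x => -x) '' D) := by
      intro y i
      refine ⟨-(K (-y) i - 1), ?_⟩
      rw [mem_neg_image]
      refine Or.inl (fun hmem => ?_)
      rw [show -(y + -(K (-y) i - 1) • eVec d i) = -y + (K (-y) i - 1) • eVec d i from by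
        rw [neg_smul]; abel] at hmem
      have := (hK (-y) i (K (-y) i - 1)).mp hmem
      omega
    have hbdd' : BoundedBelow ((fun x => -x) '' D) := by
      intro y i
      haveI : Nonempty (Fin d) := ⟨i⟩
      set M : ℤ := Finset.univ.sup' Finset.univ_nonempty (fun j => K (-y - eVec d j) i) with hM
      refine ⟨-(max (K (-y) i) M), fun k hk => ?_⟩
      rw [mem_neg_image] at hk
      rw [show -(y + k • eVec d i) = -y + (-k) • eVec d i from by rw [neg_smul]; abel] at hk
      rcases hk with hk | hk
      · have h2 : ¬ (K (-y) i ≤ -k) := fun hle => hk ((hK (-y) i (-k)).mpr hle)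
        have h3 := le_max_left (K (-y) i) M
        omega
      · obtain ⟨_, j, hj⟩ := (lambda_char hsolid _).mp hk
        rw [show -y + (-k) • eVec d i - eVec d j = (-y - eVec d j) + (-k) • eVec d i from by
          abel] at hj
        have h2 : ¬ (K (-y - eVec d j) i ≤ -k) := fun hle => hj ((hK _ i _).mpr hle)
        have h3 : K (-y - eVec d j) i ≤ M := by
          rw [hM]; exact Finset.le_sup' (fun j => K (-y - eVec d j) i) (Finset.mem_univ j)
        have h4 := le_max_right (K (-y) i) M
        omega
    refine ⟨(fun x => -x) '' D, ⟨hsat', hsol', hbdd'⟩, ?_⟩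
    ext z
    rw [mem_neg_image, lambda_char hsol']
    constructor
    · intro hz
      refine ⟨mem_neg_image.mpr (Or.inr hz), ?_⟩
      have hex : ∃ i, -z + eVec d i ∉ lambdaOf C := by
        by_contra hcon
        push_neg at hcon
        have hmem : -z ∈ {x ∈ lambdaOf C | ∀ i, x + eVec d i ∈ lambdaOf C} :=
          ⟨hz, fun i => hcon i⟩
        rw [hH] at hmem
        exact hmem
      obtain ⟨i, hi⟩ := hex
      refine ⟨i, fun hmem => ?_⟩
      rw [mem_neg_image, show -(z - eVec d i) = -z + eVec d i from by abel] at hmem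
      rcases hmem with hmem | hmem
      · exact hmem (mono_of_solidAbove hsolid (hsub hz) (fun m => by
          simp only [Pi.add_apply, eVec, Pi.single_apply]
          split <;> omega))
      · exact hi hmem
    · rintro ⟨hz, i, hi⟩
      rw [mem_neg_image] at hz
      have hi' : -z + eVec d i ∉ D := by
        intro hmem
        exact hi (mem_neg_image.mpr (by
          rwa [show -(z - eVec d i) = -z + eVec d i from by abel]))
      rcases hz with hz | hz
      · have hC1 : -z + eVec d i ∈ C := by
          by_contra hc; exact hi' (Or.inl hc)
        have hL1 : -z + eVec d i ∉ lambdaOf C := fun hl => hi' (Or.inr hl)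
        exact (hL1 ((lambda_char hsolid _).mpr ⟨hC1, i, by
          rw [show -z + eVec d i - eVec d i = -z from by abel]; exact hz⟩)).elim
      · exact hz
end

section
/- Let Λ be a terrace in Z^d and x, y ∈ Λ. Then there is a path z_(0), …, z_(n) of points in Λ with z_(0) = x, z_(n) = y, such that the ℓ¹ distance from x to z_(k) is strictly increasing in k, the ℓ¹ distance from z_(k) to y is strictly decreasing in k, and each increment z_(j+1) − z_(j) has the form e_i, −e_k, or e_i − e_k for some i ≠ k. -/
open Set

namespace TerracePathAux

variable {d : ℕ}

@[simp] lemma eVec_same (i : Fin d) : eVec d i i = 1 := by simp [eVec]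
@[simp] lemma eVec_ne {i j : Fin d} (h : j ≠ i) : eVec d i j = 0 := by simp [eVec, h]
lemma eVec_nonneg (i j : Fin d) : 0 ≤ eVec d i j := by
  by_cases h : j = i
  · subst h; simp
  · simp [h]

lemma sum_shift1 (f g : Fin d → ℤ) (i : Fin d) (c : ℤ)
    (h1 : ∀ j, j ≠ i → f j = g j) (h2 : f i = g i + c) :
    ∑ j, f j = (∑ j, g j) + c := by
  classical
  have hs : ∑ j ∈ Finset.univ.erase i, f j = ∑ j ∈ Finset.univ.erase i, g j :=
    Finset.sum_congr rfl (fun j hj => h1 j (Finset.ne_of_mem_erase hj))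
  rw [← Finset.add_sum_erase _ f (Finset.mem_univ i),
      ← Finset.add_sum_erase _ g (Finset.mem_univ i), hs, h2]
  ring

lemma sum_shift2 (f g : Fin d → ℤ) (i k : Fin d) (hik : i ≠ k) (c1 c2 : ℤ)
    (h1 : ∀ j, j ≠ i → j ≠ k → f j = g j) (h2 : f i = g i + c1) (h3 : f k = g k + c2) :
    ∑ j, f j = (∑ j, g j) + c1 + c2 := by
  classical
  have hk : k ∈ Finset.univ.erase i := Finset.mem_erase.mpr ⟨hik.symm, Finset.mem_univ k⟩
  have hs : ∑ j ∈ (Finset.univ.erase i).erase k, f j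
      = ∑ j ∈ (Finset.univ.erase i).erase k, g j :=
    Finset.sum_congr rfl (fun j hj => h1 j
      (Finset.ne_of_mem_erase (Finset.mem_of_mem_erase hj)) (Finset.ne_of_mem_erase hj))
  rw [← Finset.add_sum_erase _ f (Finset.mem_univ i), ← Finset.add_sum_erase _ f hk,
      ← Finset.add_sum_erase _ g (Finset.mem_univ i), ← Finset.add_sum_erase _ g hk,
      hs, h2, h3]
  ring

lemma chain {n : ℕ} (f : ℕ → ℤ) (h : ∀ j < n, f j < f (j+1)) :
    ∀ j k, j < k → k ≤ n → f j < f k := by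
  intro j k
  induction k with
  | zero => omega
  | succ m ih =>
    intro hjk hkn
    rcases Nat.lt_succ_iff_lt_or_eq.mp hjk with h' | h'
    · exact lt_trans (ih h' (by omega)) (h m (by omega))
    · subst h'; exact h j (by omega)

lemma upSet {C : Set (Fin d → ℤ)} (hC : SolidAbove C) {a b : Fin d → ℤ}
    (ha : a ∈ C) (hab : ∀ i, a i ≤ b i) : b ∈ C := by
  rw [← hC]; exact ⟨a, ha, hab⟩

lemma mem_lambda {C : Set (Fin d → ℤ)} (hC : SolidAbove C) {z : Fin d → ℤ} :
    z ∈ lambdaOf C ↔ z ∈ C ∧ ∃ j, z - eVec d j ∉ C := by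
  constructor
  · rintro ⟨y, i, k, rfl, hzC, hmin⟩
    refine ⟨hzC, i, fun hmem => ?_⟩
    have h1 : y + (k - 1) • eVec d i ∈ C := by
      convert hmem using 1
      funext j
      simp [sub_smul]
      ring
    have := hmin _ h1
    omega
  · rintro ⟨hzC, j, hj⟩
    refine ⟨z, j, 0, by simp, hzC, fun k' hk' => ?_⟩
    by_contra hneg
    push_neg at hneg
    refine hj (upSet hC hk' (fun m => ?_))
    by_cases hm : m = j
    · subst hm
      simp only [Pi.add_apply, Pi.sub_apply, Pi.smul_apply, eVec_same, smul_eq_mul, mul_one]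
      omega
    · simp [hm]

lemma step_lemma {C : Set (Fin d → ℤ)} (hC : SolidAbove C) {y z : Fin d → ℤ}
    (hy : y ∈ lambdaOf C) (hz : z ∈ lambdaOf C) (hne : z ≠ y) :
    ∃ w ∈ lambdaOf C,
      (∃ i, w = z + eVec d i ∧ z i < y i) ∨
      (∃ k, w = z - eVec d k ∧ y k < z k) ∨
      (∃ i k, i ≠ k ∧ w = z + eVec d i - eVec d k ∧ z i < y i ∧ y k < z k) := by
  obtain ⟨hzC, j0, hj0⟩ := (mem_lambda hC).mp hz
  obtain ⟨hyC, m, hm⟩ := (mem_lambda hC).mp hy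
  by_cases h1 : ∃ k, y k < z k ∧ z - eVec d k ∈ C
  · obtain ⟨k, hk, hkC⟩ := h1
    refine ⟨z - eVec d k, (mem_lambda hC).mpr ⟨hkC, j0,
      fun hmem => hj0 (upSet hC hmem (fun m' => ?_))⟩, Or.inr (Or.inl ⟨k, rfl, hk⟩)⟩
    have := eVec_nonneg k m'
    simp only [Pi.sub_apply]
    omega
  · push_neg at h1
    by_cases hT : ∃ k, y k < z k
    · obtain ⟨k, hk⟩ := hT
      have hkC := h1 k hk
      by_cases hS : ∃ i, z i < y i
      · obtain ⟨i, hi⟩ := hS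
        have hik : i ≠ k := by intro h; subst h; omega
        by_cases hw : z + eVec d i - eVec d k ∈ C
        · refine ⟨_, (mem_lambda hC).mpr ⟨hw, i, ?_⟩,
            Or.inr (Or.inr ⟨i, k, hik, rfl, hi, hk⟩)⟩
          have he : z + eVec d i - eVec d k - eVec d i = z - eVec d k := by ring
          rw [he]; exact hkC
        · refine ⟨z + eVec d i, (mem_lambda hC).mpr
            ⟨upSet hC hzC (fun m' => by
              have := eVec_nonneg i m'; simp only [Pi.add_apply]; omega),
             k, hw⟩, Or.inl ⟨i, rfl, hi⟩⟩
      · push_neg at hS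
        refine absurd (upSet hC hyC (fun m' => ?_)) hkC
        by_cases hm' : m' = k
        · subst hm'; simp only [Pi.sub_apply, eVec_same]; omega
        · simp only [Pi.sub_apply, eVec_ne hm']
          have := hS m'; omega
    · push_neg at hT
      by_cases hS2 : ∃ i, z i < y i ∧ i ≠ m
      · obtain ⟨i, hi, him⟩ := hS2
        refine ⟨z + eVec d i, (mem_lambda hC).mpr
          ⟨upSet hC hzC (fun m' => by
            have := eVec_nonneg i m'; simp only [Pi.add_apply]; omega),
           m, fun hmem => hm (upSet hC hmem (fun m' => ?_))⟩, Or.inl ⟨i, rfl, hi⟩⟩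
        simp only [Pi.add_apply, Pi.sub_apply]
        by_cases h'i : m' = i
        · subst h'i
          rw [eVec_same, eVec_ne him]
          omega
        · rw [eVec_ne h'i]
          have := hT m'
          have := eVec_nonneg m m'
          omega
      · push_neg at hS2
        have hzm : z m < y m := by
          by_contra h'
          apply hne
          funext i
          by_cases him : i = m
          · rw [him]; have := hT m; omega
          · have h2 := hT i
            rcases lt_or_eq_of_le h2 with h3 | h3
            · exact absurd (hS2 i h3) him
            · exact h3
        by_cases ht : z m + 1 = y m
        · refine ⟨y, hy, Or.inl ⟨m, ?_, hzm⟩⟩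
          funext i
          by_cases him : i = m
          · subst him; simp only [Pi.add_apply, eVec_same]; omega
          · simp only [Pi.add_apply, eVec_ne him]
            have h2 := hT i
            rcases lt_or_eq_of_le h2 with h3 | h3
            · exact absurd (hS2 i h3) him
            · omega
        · exfalso
          apply hm
          have hw : z + eVec d m ∈ C := upSet hC hzC (fun m' => by
            have := eVec_nonneg m m'; simp only [Pi.add_apply]; omega)
          refine upSet hC hw (fun m' => ?_)
          simp only [Pi.add_apply, Pi.sub_apply]
          by_cases h'm : m' = m
          · subst h'm; rw [eVec_same]; omega
          · rw [eVec_ne h'm]; have := hT m'; omega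

lemma build {C : Set (Fin d → ℤ)} (hC : SolidAbove C) (x y : Fin d → ℤ)
    (hy : y ∈ lambdaOf C) :
    ∀ t : ℕ, ∀ z : Fin d → ℤ, z ∈ lambdaOf C →
      (∀ i, (x i ≤ z i ∧ z i ≤ y i) ∨ (y i ≤ z i ∧ z i ≤ x i)) →
      (∑ i, |z i - y i|) ≤ (t : ℤ) →
    ∃ n, ∃ w : ℕ → Fin d → ℤ, w 0 = z ∧ w n = y ∧ (∀ j ≤ n, w j ∈ lambdaOf C) ∧
      ∀ j < n,
        ((∃ i, w (j+1) - w j = eVec d i) ∨ (∃ i, w (j+1) - w j = -eVec d i) ∨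
          (∃ i k, i ≠ k ∧ w (j+1) - w j = eVec d i - eVec d k)) ∧
        (∑ i, |w j i - x i|) < (∑ i, |w (j+1) i - x i|) ∧
        (∑ i, |w (j+1) i - y i|) < (∑ i, |w j i - y i|) := by
  intro t
  induction t with
  | zero =>
    intro z hz hb hsum
    have hz0 : z = y := by
      have hnn : ∀ i ∈ Finset.univ, (0:ℤ) ≤ |z i - y i| := fun i _ => abs_nonneg _
      have h0 := (Finset.sum_eq_zero_iff_of_nonneg hnn).mp
        (le_antisymm (by simpa using hsum) (Finset.sum_nonneg hnn))
      funext i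
      have := abs_eq_zero.mp (h0 i (Finset.mem_univ i))
      omega
    subst hz0
    exact ⟨0, fun _ => z, rfl, rfl, fun j hj => by simpa using hz, fun j hj => by omega⟩
  | succ t ih =>
    intro z hz hb hsum
    by_cases hzy : z = y
    · subst hzy
      exact ⟨0, fun _ => z, rfl, rfl, fun j hj => by simpa using hz, fun j hj => by omega⟩
    · obtain ⟨w0, hw0L, hshape⟩ := step_lemma hC hy hz hzy
      have key : (∀ i, (x i ≤ w0 i ∧ w0 i ≤ y i) ∨ (y i ≤ w0 i ∧ w0 i ≤ x i)) ∧
          (∃ c : ℤ, 1 ≤ c ∧ (∑ i, |w0 i - x i|) = (∑ i, |z i - x i|) + c ∧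
            (∑ i, |w0 i - y i|) = (∑ i, |z i - y i|) - c) ∧
          ((∃ i, w0 - z = eVec d i) ∨ (∃ i, w0 - z = -eVec d i) ∨
            (∃ i k, i ≠ k ∧ w0 - z = eVec d i - eVec d k)) := by
        rcases hshape with ⟨i, rfl, hi⟩ | ⟨k, rfl, hk⟩ | ⟨i, k, hik, rfl, hi, hk⟩
        · -- step +e_i
          have hxi : x i ≤ z i := by rcases hb i with h | h <;> omega
          have hsx : (∑ j, |(z + eVec d i) j - x j|) = (∑ j, |z j - x j|) + 1 :=
            sum_shift1 (fun j => |(z + eVec d i) j - x j|) (fun j => |z j - x j|) i 1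
              (fun j hj => by simp [eVec_ne hj])
              (by simp only [Pi.add_apply, eVec_same]
                  rw [abs_of_nonneg (by omega), abs_of_nonneg (by omega)]; ring)
          have hsy : (∑ j, |(z + eVec d i) j - y j|) = (∑ j, |z j - y j|) + (-1) :=
            sum_shift1 (fun j => |(z + eVec d i) j - y j|) (fun j => |z j - y j|) i (-1)
              (fun j hj => by simp [eVec_ne hj])
              (by simp only [Pi.add_apply, eVec_same]
                  rw [abs_of_nonpos (by omega), abs_of_nonpos (by omega)]; ring)
          refine ⟨fun i' => ?_, ⟨1, le_refl _, hsx, by omega⟩, Or.inl ⟨i, by ring⟩⟩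
          by_cases h' : i' = i
          · subst h'; left; simp only [Pi.add_apply, eVec_same]; omega
          · simp only [Pi.add_apply, eVec_ne h', add_zero]; exact hb i'
        · -- step -e_k
          have hxk : z k ≤ x k := by rcases hb k with h | h <;> omega
          have hsx : (∑ j, |(z - eVec d k) j - x j|) = (∑ j, |z j - x j|) + 1 :=
            sum_shift1 (fun j => |(z - eVec d k) j - x j|) (fun j => |z j - x j|) k 1
              (fun j hj => by simp [eVec_ne hj])
              (by simp only [Pi.sub_apply, eVec_same]
                  rw [abs_of_nonpos (by omega), abs_of_nonpos (by omega)]; ring)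
          have hsy : (∑ j, |(z - eVec d k) j - y j|) = (∑ j, |z j - y j|) + (-1) :=
            sum_shift1 (fun j => |(z - eVec d k) j - y j|) (fun j => |z j - y j|) k (-1)
              (fun j hj => by simp [eVec_ne hj])
              (by simp only [Pi.sub_apply, eVec_same]
                  rw [abs_of_nonneg (by omega), abs_of_nonneg (by omega)]; ring)
          refine ⟨fun i' => ?_, ⟨1, le_refl _, hsx, by omega⟩, Or.inr (Or.inl ⟨k, by ring⟩)⟩
          by_cases h' : i' = k
          · subst h'; right; simp only [Pi.sub_apply, eVec_same]; omega
          · simp only [Pi.sub_apply, eVec_ne h', sub_zero]; exact hb i'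
        · -- step e_i - e_k
          have hxi : x i ≤ z i := by rcases hb i with h | h <;> omega
          have hxk : z k ≤ x k := by rcases hb k with h | h <;> omega
          have hki : k ≠ i := hik.symm
          have hsx : (∑ j, |(z + eVec d i - eVec d k) j - x j|) = (∑ j, |z j - x j|) + 1 + 1 :=
            sum_shift2 (fun j => |(z + eVec d i - eVec d k) j - x j|) (fun j => |z j - x j|)
              i k hik 1 1
              (fun j hji hjk => by simp [eVec_ne hji, eVec_ne hjk])
              (by simp only [Pi.add_apply, Pi.sub_apply, eVec_same, eVec_ne hik]
                  rw [abs_of_nonneg (by omega), abs_of_nonneg (by omega)]; ring)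
              (by simp only [Pi.add_apply, Pi.sub_apply, eVec_same, eVec_ne hki]
                  rw [abs_of_nonpos (by omega), abs_of_nonpos (by omega)]; ring)
          have hsy : (∑ j, |(z + eVec d i - eVec d k) j - y j|)
              = (∑ j, |z j - y j|) + (-1) + (-1) :=
            sum_shift2 (fun j => |(z + eVec d i - eVec d k) j - y j|) (fun j => |z j - y j|)
              i k hik (-1) (-1)
              (fun j hji hjk => by simp [eVec_ne hji, eVec_ne hjk])
              (by simp only [Pi.add_apply, Pi.sub_apply, eVec_same, eVec_ne hik]
                  rw [abs_of_nonpos (by omega), abs_of_nonpos (by omega)]; ring)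
              (by simp only [Pi.add_apply, Pi.sub_apply, eVec_same, eVec_ne hki]
                  rw [abs_of_nonneg (by omega), abs_of_nonneg (by omega)]; ring)
          refine ⟨fun i' => ?_, ⟨2, by omega, by omega, by omega⟩,
            Or.inr (Or.inr ⟨i, k, hik, by ring⟩)⟩
          by_cases h'i : i' = i
          · subst h'i; left
            simp only [Pi.add_apply, Pi.sub_apply, eVec_same, eVec_ne hik]
            omega
          · by_cases h'k : i' = k
            · subst h'k; right
              simp only [Pi.add_apply, Pi.sub_apply, eVec_same, eVec_ne hki]
              omega
            · simp only [Pi.add_apply, Pi.sub_apply, eVec_ne h'i, eVec_ne h'k,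
                add_zero, sub_zero]
              exact hb i'
      obtain ⟨hbw, ⟨c, hc1, hcx, hcy⟩, hstep0⟩ := key
      have hm2 : (∑ i, |w0 i - y i|) ≤ (t : ℤ) := by push_cast at hsum ⊢; omega
      obtain ⟨n, w, hws, hwe, hmem, hstep⟩ := ih w0 hw0L hbw hm2
      refine ⟨n + 1, fun j => if j = 0 then z else w (j - 1), by simp, by simp [hwe], ?_, ?_⟩
      · intro j hj
        by_cases hj0 : j = 0
        · simpa [hj0] using hz
        · simp only [hj0, if_false]
          exact hmem (j-1) (by omega)
      · intro j hj
        by_cases hj0 : j = 0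
        · subst hj0
          have hA : (if (0:ℕ) = 0 then z else w (0 - 1)) = z := if_pos rfl
          have hB : (if (0:ℕ) + 1 = 0 then z else w (0 + 1 - 1)) = w0 := by
            rw [if_neg (by omega)]; simpa using hws
          beta_reduce
          rw [hB, hA]
          exact ⟨hstep0, by omega, by omega⟩
        · obtain ⟨j', rfl⟩ : ∃ j', j = j' + 1 := ⟨j-1, by omega⟩
          have e1 : j' + 1 + 1 ≠ 0 := by omega
          have e2 : j' + 1 ≠ 0 := by omega
          simp only [if_neg e1, if_neg e2, Nat.add_sub_cancel]
          exact hstep j' (by omega)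

end TerracePathAux

theorem terrace_standard_path {d : ℕ} (Λ : Set (Fin d → ℤ)) (h : IsTerrace Λ)
    (x y : Fin d → ℤ) (hx : x ∈ Λ) (hy : y ∈ Λ) :
    ∃ (n : ℕ) (z : ℕ → Fin d → ℤ),
      z 0 = x ∧ z n = y ∧ (∀ j ≤ n, z j ∈ Λ) ∧
      (∀ j k, j < k → k ≤ n → (∑ i, |z j i - x i|) < ∑ i, |z k i - x i|) ∧
      (∀ j k, j < k → k ≤ n → (∑ i, |z k i - y i|) < ∑ i, |z j i - y i|) ∧
      (∀ j < n, (∃ i, z (j + 1) - z j = eVec d i) ∨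
        (∃ i, z (j + 1) - z j = -eVec d i) ∨
        (∃ i k, i ≠ k ∧ z (j + 1) - z j = eVec d i - eVec d k)) := by
  obtain ⟨C, ⟨-, hC, -⟩, rfl⟩ := h
  have hb0 : ∀ i, (x i ≤ x i ∧ x i ≤ y i) ∨ (y i ≤ x i ∧ x i ≤ x i) := by
    intro i
    rcases le_total (x i) (y i) with h' | h'
    · exact Or.inl ⟨le_refl _, h'⟩
    · exact Or.inr ⟨h', le_refl _⟩
  obtain ⟨n, w, hws, hwe, hmem, hstep⟩ :=
    TerracePathAux.build hC x y hy ((∑ i, |x i - y i|).toNat) x hx hb0 (Int.self_le_toNat _)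
  refine ⟨n, w, hws, hwe, hmem, ?_, ?_, fun j hj => (hstep j hj).1⟩
  · intro j k hjk hkn
    exact TerracePathAux.chain (fun j => ∑ i, |w j i - x i|)
      (fun j hj => (hstep j hj).2.1) j k hjk hkn
  · intro j k hjk hkn
    have h2 := TerracePathAux.chain (fun j => -(∑ i, |w j i - y i|))
      (fun j hj => by
        have h3 := (hstep j hj).2.2
        show -(∑ i, |w j i - y i|) < -(∑ i, |w (j+1) i - y i|)
        omega) j k hjk hkn
    have h4 : -(∑ i, |w j i - y i|) < -(∑ i, |w k i - y i|) := h2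
    omega
end

section
/- Let Λ ⊆ Z^d be a terrace with a corner at z (i.e., z ∈ Λ and z − e_i ∉ Λ for all i ∈ [d]). Then Λ_+ \ {z} is a good set, and Λ \ {z} ⊆ λ_{Λ_+ \ {z}} ⊆ (Λ \ {z}) ∪ {z + e_j : j ∈ [d]}. -/
open Set

lemma eVec_apply {d : ℕ} (i j : Fin d) : eVec d i j = if j = i then 1 else 0 := by
  simp [eVec, Pi.single_apply]

lemma mono_mem {d : ℕ} {C : Set (Fin d → ℤ)} (hC : SolidAbove C) {w y : Fin d → ℤ}
    (hw : w ∈ C) (h : ∀ i, w i ≤ y i) : y ∈ C := by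
  rw [← hC]; exact ⟨w, hw, h⟩

lemma lambda_subset {d : ℕ} (C : Set (Fin d → ℤ)) : lambdaOf C ⊆ C := by
  rintro w ⟨y, i, k, -, hw, -⟩; exact hw

lemma mem_lambda_iff {d : ℕ} {C : Set (Fin d → ℤ)} (hC : SolidAbove C) (w : Fin d → ℤ) :
    w ∈ lambdaOf C ↔ w ∈ C ∧ ∃ i, w - eVec d i ∉ C := by
  constructor
  · rintro ⟨y, i, k, hw, hwC, hmin⟩
    refine ⟨hwC, i, fun hcon => ?_⟩
    have : y + (k - 1) • eVec d i ∈ C := by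
      have : w - eVec d i = y + (k - 1) • eVec d i := by
        rw [hw]; funext j; simp [sub_smul]; ring
      rwa [← this]
    have := hmin _ this
    omega
  · rintro ⟨hwC, i, hni⟩
    refine ⟨w, i, 0, by simp, hwC, fun k' hk' => ?_⟩
    by_contra hlt
    push_neg at hlt
    exact hni (mono_mem hC hk' (fun j => by
      simp only [Pi.add_apply, Pi.sub_apply, Pi.smul_apply, smul_eq_mul, eVec_apply]
      by_cases hji : j = i <;> simp [hji] <;> omega))

lemma plusSet_lambda {d : ℕ} {C : Set (Fin d → ℤ)} (hC : Good C) (i : Fin d) :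
    plusSet (lambdaOf C) = C := by
  apply Set.Subset.antisymm
  · rintro y ⟨w, hw, hwy⟩
    exact mono_mem hC.2.1 (lambda_subset C hw) hwy
  · intro y hy
    obtain ⟨m, hm⟩ := hC.2.2 y i
    obtain ⟨k₀, hk₀, hleast⟩ := Int.exists_least_of_bdd (P := fun k => y + k • eVec d i ∈ C)
      ⟨m, hm⟩ ⟨0, by simpa using hy⟩
    have hk0 : k₀ ≤ 0 := hleast 0 (by simpa using hy)
    refine ⟨y + k₀ • eVec d i, ⟨y, i, k₀, rfl, hk₀, hleast⟩, fun j => ?_⟩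
    simp only [Pi.add_apply, Pi.smul_apply, smul_eq_mul, eVec_apply]
    by_cases hji : j = i <;> simp [hji] <;> omega

theorem pushing_up_corner {d : ℕ} (Λ : Set (Fin d → ℤ)) (h : IsTerrace Λ)
    (z : Fin d → ℤ) (hz : z ∈ Λ) (hcorner : ∀ i, z - eVec d i ∉ Λ) :
    Good (plusSet Λ \ {z}) ∧
      Λ \ {z} ⊆ lambdaOf (plusSet Λ \ {z}) ∧
      lambdaOf (plusSet Λ \ {z}) ⊆ (Λ \ {z}) ∪ {w | ∃ j : Fin d, w = z + eVec d j} := by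
  obtain ⟨C, hC, rfl⟩ := h
  obtain ⟨hzC, i₀, hzi₀⟩ := (mem_lambda_iff hC.2.1 z).1 hz
  have hplus : plusSet (lambdaOf C) = C := plusSet_lambda hC i₀
  rw [hplus]
  -- corner in C
  have hcornC : ∀ i, z - eVec d i ∉ C := by
    intro i hcon
    have hni : z - eVec d i ∉ lambdaOf C := hcorner i
    rw [mem_lambda_iff hC.2.1] at hni
    push_neg at hni
    have hall := hni hcon i₀
    exact hzi₀ (mono_mem hC.2.1 hall (fun j => by
      simp only [Pi.sub_apply]
      have : (0:ℤ) ≤ eVec d i j := by rw [eVec_apply]; split <;> omega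
      omega))
  set D : Set (Fin d → ℤ) := C \ {z} with hD
  -- D is solid above
  have hDsolid : SolidAbove D := by
    apply Set.Subset.antisymm
    · rintro y ⟨w, ⟨hwC, hwz⟩, hwy⟩
      refine ⟨mono_mem hC.2.1 hwC hwy, ?_⟩
      intro hyz
      rw [Set.mem_singleton_iff] at hyz
      -- w ≤ z, w ≠ z, so w ≤ z - e_i for some i
      have hwy' : ∀ j, w j ≤ z j := fun j => hyz ▸ hwy j
      have : ∃ i, w i < z i := by
        by_contra hcon
        push_neg at hcon
        exact hwz (Set.mem_singleton_iff.2 (funext fun j =>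
          le_antisymm (hwy' j) (hcon j)))
      obtain ⟨i, hi⟩ := this
      exact hcornC i (mono_mem hC.2.1 hwC (fun j => by
        simp only [Pi.sub_apply]
        have := hwy j
        have : (0:ℤ) ≤ eVec d i j ∧ eVec d i j ≤ 1 := by
          rw [eVec_apply]; split <;> omega
        by_cases hji : j = i
        · subst hji; rw [eVec_apply]; simp; omega
        · rw [eVec_apply]; simp [hji]; exact hwy' j))
    · intro w hw; exact ⟨w, hw, fun j => le_rfl⟩
  constructor
  · refine ⟨?_, hDsolid, ?_⟩
    · -- saturated
      intro y i
      obtain ⟨k, hk⟩ := hC.1 y i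
      by_cases hkz : y + k • eVec d i = z
      · refine ⟨k + 1, ⟨mono_mem hC.2.1 hk (fun j => by
          simp only [Pi.add_apply, Pi.smul_apply, smul_eq_mul, eVec_apply]
          by_cases hji : j = i <;> simp [hji]), ?_⟩⟩
        intro hcon
        rw [Set.mem_singleton_iff] at hcon
        have h1 := congrFun hkz i
        have h2 := congrFun hcon i
        simp [eVec_apply] at h1 h2
        omega
      · exact ⟨k, hk, hkz⟩
    · -- bounded below
      intro y i
      obtain ⟨m, hm⟩ := hC.2.2 y i
      exact ⟨m, fun k hk => hm k hk.1⟩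
  constructor
  · -- Λ \ {z} ⊆ λ_D
    rintro w ⟨hwΛ, hwz⟩
    obtain ⟨hwC, i, hwi⟩ := (mem_lambda_iff hC.2.1 w).1 hwΛ
    rw [mem_lambda_iff hDsolid]
    exact ⟨⟨hwC, hwz⟩, i, fun hcon => hwi hcon.1⟩
  · -- λ_D ⊆ (Λ \ {z}) ∪ {z + e_j}
    intro w hw
    obtain ⟨⟨hwC, hwz⟩, i, hwi⟩ := (mem_lambda_iff hDsolid w).1 hw
    by_cases hcase : w - eVec d i = z
    · right
      refine ⟨i, ?_⟩
      funext j
      have := congrFun hcase j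
      simp only [Pi.sub_apply] at this
      simp only [Pi.add_apply]
      omega
    · left
      refine ⟨(mem_lambda_iff hC.2.1 w).2 ⟨hwC, i, fun hcon => hwi ⟨hcon, hcase⟩⟩, hwz⟩
end

section
/- Let Q = [a,b] be a box in Z^d and let A ⊆ Q be Q-solid above and A ≠ Q. Define λ^Q_A = {x ∈ A : ∃ i ∈ [d] with x − e_i ∈ Q \ A}. Then (λ^Q_A)_+ = A_+. -/
open Set

theorem lambdaQ_plus_eq {d : ℕ} (a b : Fin d → ℤ) (hab : ∀ i, a i ≤ b i)
    (A : Set (Fin d → ℤ)) (hAQ : A ⊆ box a b)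
    (hsolid : plusSet A ∩ box a b = A) (hne : A ≠ box a b) :
    plusSet {x ∈ A | ∃ i : Fin d, x - eVec d i ∈ box a b \ A} = plusSet A := by
  have hAeq : ∀ z ∈ A, z ∈ box a b := hAQ
  -- a ∈ A would force A = Q
  have haA : a ∉ A := by
    intro ha
    apply hne
    apply subset_antisymm hAQ
    intro q hq
    rw [← hsolid]
    exact ⟨⟨a, ha, fun i => (hq i).1⟩, hq⟩
  have key : ∀ n : ℕ, ∀ z, z ∈ A → (∑ i, (z i - a i)).toNat = n →
      ∃ w, (w ∈ A ∧ ∃ i : Fin d, w - eVec d i ∈ box a b \ A) ∧ ∀ i, w i ≤ z i := by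
    intro n
    induction n using Nat.strong_induction_on with
    | _ n ih =>
      intro z hzA hn
      by_cases h : ∃ i, z - eVec d i ∈ A
      · obtain ⟨i, hi⟩ := h
        set z' := z - eVec d i with hz'
        have hle : ∀ j, z' j ≤ z j := by
          intro j
          by_cases hj : j = i
          · subst hj; simp [hz', eVec]
          · simp [hz', eVec, Pi.single_eq_of_ne hj]
        have hnonneg : ∀ j, 0 ≤ z' j - a j := fun j => by
          have := (hAQ hi j).1; omega
        have hsum : ∑ j, (z' j - a j) = (∑ j, (z j - a j)) - 1 := by
          have h1 : ∀ j, z' j - a j = (z j - a j) - eVec d i j := by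
            intro j; simp [hz']; ring
          simp only [h1, Finset.sum_sub_distrib]
          have : ∑ j, eVec d i j = 1 := by
            simp [eVec, Finset.sum_pi_single']
          rw [this]
        have hpos : 0 ≤ ∑ j, (z' j - a j) := Finset.sum_nonneg fun j _ => hnonneg j
        have hlt : (∑ j, (z' j - a j)).toNat < n := by omega
        obtain ⟨w, hw, hwle⟩ := ih _ hlt z' hi rfl
        exact ⟨w, hw, fun j => (hwle j).trans (hle j)⟩
      · push_neg at h
        by_cases hz : ∃ i, a i < z i
        · obtain ⟨i, hi⟩ := hz
          refine ⟨z, ⟨hzA, i, ?_, h i⟩, fun j => le_refl _⟩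
          intro j
          by_cases hj : j = i
          · subst hj
            have := (hAQ hzA j).2
            simp [eVec]; omega
          · have := hAQ hzA j
            simp [eVec, Pi.single_eq_of_ne hj]; omega
        · push_neg at hz
          have : z = a := funext fun i => le_antisymm (hz i) (hAQ hzA i).1
          exact absurd (this ▸ hzA) haA
  apply subset_antisymm
  · rintro y ⟨w, ⟨hwA, _⟩, hle⟩
    exact ⟨w, hwA, hle⟩
  · rintro y ⟨z, hzA, hzy⟩
    obtain ⟨w, hw, hle⟩ := key _ z hzA rfl
    exact ⟨w, ⟨hw.1, hw.2⟩, fun i => (hle i).trans (hzy i)⟩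
end

section
/- Let Q = [a,b] ⊆ Z^d be a box, let G ⊆ Q be Q-solid above, and let z be a corner of G (z ∈ G and z − e_i ∉ G for each i). Then G \ {z} is Q-solid above. -/
open Set

theorem Qsolid_remove_corner {d : ℕ} (a b : Fin d → ℤ) (hab : ∀ i, a i ≤ b i)
    (G : Set (Fin d → ℤ)) (hGQ : G ⊆ box a b)
    (hsolid : plusSet G ∩ box a b = G)
    (z : Fin d → ℤ) (hz : z ∈ G) (hcorner : ∀ i, z - eVec d i ∉ G) :
    plusSet (G \ {z}) ∩ box a b = G \ {z} := by
  ext y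
  constructor
  · rintro ⟨⟨x, ⟨hxG, hxz⟩, hxy⟩, hyQ⟩
    have hyG : y ∈ G := by
      rw [← hsolid]; exact ⟨⟨x, hxG, hxy⟩, hyQ⟩
    refine ⟨hyG, ?_⟩
    intro hyz
    have hyz' : y = z := hyz
    subst hyz'
    have : ∃ i, x i < y i := by
      by_contra h
      push_neg at h
      exact hxz (funext fun i => le_antisymm (hxy i) (h i))
    obtain ⟨i, hi⟩ := this
    apply hcorner i
    rw [← hsolid]
    constructor
    · refine ⟨x, hxG, fun j => ?_⟩
      by_cases hji : j = i
      · subst hji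
        simp only [Pi.sub_apply, eVec, Pi.single_eq_same]
        omega
      · simp only [Pi.sub_apply, eVec, Pi.single_eq_of_ne hji]
        have := hxy j; omega
    · intro j
      have hyQ' := hyQ j
      have hxQ := hGQ hxG j
      by_cases hji : j = i
      · subst hji
        simp only [Pi.sub_apply, eVec, Pi.single_eq_same]
        omega
      · simp only [Pi.sub_apply, eVec, Pi.single_eq_of_ne hji]
        omega
  · rintro ⟨hyG, hyz⟩
    exact ⟨⟨y, ⟨hyG, hyz⟩, fun i => le_refl _⟩, hGQ hyG⟩
end
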